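/- arXiv:2303.17062 — 2 statements merged into one kernel-verified Lean document; each statement's English description precedes it below -/
import Mathlib

section
/- For any probability vector p in the simplex Δ^C and any fold f_{i→j} (which merges coordinates i and j by summing them), the H-entropy does not decrease: H_ℓ(p) ≤ H_{ℓ̃}(f_{i→j}(p)), where ℓ̃ is the worst-case set extension of the loss (the folded loss matrix L̃ has column j replaced by the entrywise maximum of columns i and j, and column i removed). -/
open Finset

/-- H-entropy: Bayes optimal loss `min_a (Lp)_a`. -/
noncomputable def Hent {A Z : Type*} [Fintype A] [Nonempty A] [Fintype Z]
    (L : A → Z → ℝ) (p : Z → ℝ) : ℝ :=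
  Finset.univ.inf' Finset.univ_nonempty fun a => ∑ z, L a z * p z

/-- Membership in the probability simplex. -/
def InSimplex {Z : Type*} [Fintype Z] (p : Z → ℝ) : Prop :=
  (∀ z, 0 ≤ p z) ∧ ∑ z, p z = 1

/-- Fold `f_{i→j}` on probability vectors: delete coordinate `i`, add its mass to `j`. -/
def foldP {Z : Type*} [DecidableEq Z] (i j : Z) (p : Z → ℝ) :
    {k : Z // k ≠ i} → ℝ :=
  fun k => if (k : Z) = j then p i + p j else p k

/-- Worst-case folded loss: column `j` becomes the entrywise max of columns `i` and `j`. -/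
def foldL {A Z : Type*} [DecidableEq Z] (i j : Z) (L : A → Z → ℝ) :
    A → {k : Z // k ≠ i} → ℝ :=
  fun a k => if (k : Z) = j then max (L a i) (L a j) else L a k

/-- folding never decreases H-entropy (worst-case set extension). -/
theorem fold_increases_hentropy {A Z : Type*} [Fintype A] [Nonempty A]
    [Fintype Z] [DecidableEq Z]
    (L : A → Z → ℝ) (p : Z → ℝ) (i j : Z) (hij : i ≠ j) (hp : InSimplex p) :
    Hent L p ≤ Hent (foldL i j L) (foldP i j p) := by
  have key : ∀ a, ∑ z, L a z * p z ≤ ∑ k, foldL i j L a k * foldP i j p k := by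
    intro a
    have hsub : ∑ k : {k : Z // k ≠ i}, foldL i j L a k * foldP i j p k
        = ∑ z ∈ univ.erase i, (if z = j then max (L a i) (L a j) * (p i + p j)
            else L a z * p z) := by
      rw [Finset.sum_subtype (p := fun k => k ≠ i) (univ.erase i) (fun x => by simp) _]
      refine Finset.sum_congr rfl fun x hx => ?_
      simp only [foldL, foldP]
      by_cases h : (x : Z) = j <;> simp [h]
    have hjmem : j ∈ univ.erase i := by simp [hij.symm]
    have himem : i ∈ (univ : Finset Z) := by simp
    rw [hsub, ← Finset.add_sum_erase _ _ hjmem]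
    simp only [if_pos rfl, if_true, eq_self_iff_true]
    have : ∑ z ∈ (univ.erase i).erase j, (if z = j then max (L a i) (L a j) * (p i + p j)
        else L a z * p z) = ∑ z ∈ (univ.erase i).erase j, L a z * p z := by
      refine Finset.sum_congr rfl fun x hx => ?_
      rw [if_neg (Finset.ne_of_mem_erase hx)]
    rw [this]
    have hL : ∑ z, L a z * p z
        = L a i * p i + (L a j * p j + ∑ z ∈ (univ.erase i).erase j, L a z * p z) := by
      rw [← Finset.add_sum_erase _ _ himem, ← Finset.add_sum_erase _ _ hjmem]
    rw [hL]
    have hmax : L a i * p i + L a j * p j ≤ max (L a i) (L a j) * (p i + p j) := by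
      have h1 : L a i * p i ≤ max (L a i) (L a j) * p i :=
        mul_le_mul_of_nonneg_right (le_max_left _ _) (hp.1 i)
      have h2 : L a j * p j ≤ max (L a i) (L a j) * p j :=
        mul_le_mul_of_nonneg_right (le_max_right _ _) (hp.1 j)
      nlinarith
    linarith
  unfold Hent
  apply Finset.le_inf'
  intro a _
  exact le_trans (Finset.inf'_le _ (Finset.mem_univ a)) (key a)
end

section
/- For any finite sequence of folds f_{i_N→j_N} ∘ ⋯ ∘ f_{i_1→j_1} applied to a probability vector p ∈ Δ^C, with the loss matrix updated at each fold by the worst-case set extension, the H-entropy is monotonically nondecreasing along the sequence: H_ℓ(p) ≤ H_{ℓ̃}(q) where q is the final folded vector and ℓ̃ the final folded loss. -/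
open Finset

/-- A state `(W, L', q)` is reachable from `(Z, L, p)` by a finite sequence of folds,
updating the loss by the worst-case set extension at each fold. -/
inductive Folded (A : Type) [Fintype A] [Nonempty A] :
    (Z : Type) → [Fintype Z] → [DecidableEq Z] → (A → Z → ℝ) → (Z → ℝ) →
    (W : Type) → [Fintype W] → [DecidableEq W] → (A → W → ℝ) → (W → ℝ) → Prop
  | refl (Z : Type) [Fintype Z] [DecidableEq Z] (L : A → Z → ℝ) (p : Z → ℝ) :
      Folded A Z L p Z L p
  | step (Z : Type) [Fintype Z] [DecidableEq Z] (L : A → Z → ℝ) (p : Z → ℝ)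
      (i j : Z) (hij : i ≠ j)
      (W : Type) [Fintype W] [DecidableEq W] (L' : A → W → ℝ) (q : W → ℝ)
      (h : Folded A {k : Z // k ≠ i} (foldL i j L) (foldP i j p) W L' q) :
      Folded A Z L p W L' q

lemma sum_split_aux {Z : Type*} [Fintype Z] [DecidableEq Z] (i : Z) (f : Z → ℝ) :
    ∑ z, f z = f i + ∑ k : {k : Z // k ≠ i}, f k := by
  rw [← Finset.sum_subtype (p := fun k => k ≠ i) (Finset.univ.erase i) (by simp) f]
  exact (Finset.add_sum_erase _ f (mem_univ i)).symm

lemma foldP_simplex {Z : Type*} [Fintype Z] [DecidableEq Z] {i j : Z} (hij : i ≠ j)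
    {p : Z → ℝ} (hp : InSimplex p) : InSimplex (foldP i j p) := by
  obtain ⟨h0, h1⟩ := hp
  constructor
  · intro k
    unfold foldP
    split
    · exact add_nonneg (h0 i) (h0 j)
    · exact h0 k
  · have key : ∑ k : {k : Z // k ≠ i}, (foldP i j p k - p (k : Z)) = p i := by
      rw [Finset.sum_eq_single (⟨j, hij.symm⟩ : {k : Z // k ≠ i})]
      · simp [foldP]
      · intro b _ hb
        have : (b : Z) ≠ j := fun h => hb (Subtype.ext h)
        simp [foldP, this]
      · simp
    have := sum_split_aux i p
    have hsum : ∑ k : {k : Z // k ≠ i}, foldP i j p k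
        = ∑ k : {k : Z // k ≠ i}, (foldP i j p k - p (k : Z))
          + ∑ k : {k : Z // k ≠ i}, p (k : Z) := by
      rw [← Finset.sum_add_distrib]; simp
    rw [hsum, key]
    linarith

lemma step_le {A Z : Type*} [DecidableEq Z] [Fintype Z] (a : A) {i j : Z} (hij : i ≠ j)
    (L : A → Z → ℝ) {p : Z → ℝ} (hp : InSimplex p) :
    ∑ z, L a z * p z ≤ ∑ k : {k : Z // k ≠ i}, foldL i j L a k * foldP i j p k := by
  obtain ⟨h0, _⟩ := hp
  have key : ∑ k : {k : Z // k ≠ i},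
      (foldL i j L a k * foldP i j p k - L a (k : Z) * p (k : Z))
      = max (L a i) (L a j) * (p i + p j) - L a j * p j := by
    rw [Finset.sum_eq_single (⟨j, hij.symm⟩ : {k : Z // k ≠ i})]
    · simp [foldL, foldP]
    · intro b _ hb
      have : (b : Z) ≠ j := fun h => hb (Subtype.ext h)
      simp [foldL, foldP, this]
    · simp
  have hsum : ∑ k : {k : Z // k ≠ i}, foldL i j L a k * foldP i j p k
      = ∑ k : {k : Z // k ≠ i},
          (foldL i j L a k * foldP i j p k - L a (k : Z) * p (k : Z))
        + ∑ k : {k : Z // k ≠ i}, L a (k : Z) * p (k : Z) := by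
    rw [← Finset.sum_add_distrib]; simp
  rw [hsum, key, sum_split_aux i (fun z => L a z * p z)]
  have h1 : L a i ≤ max (L a i) (L a j) := le_max_left _ _
  have h2 : L a j ≤ max (L a i) (L a j) := le_max_right _ _
  have := h0 i; have := h0 j
  nlinarith

/-- H-entropy is monotonically nondecreasing along any finite
sequence of folds with the worst-case set extension. -/
theorem hent_mono_fold_sequence (A : Type) [Fintype A] [Nonempty A]
    (Z : Type) [Fintype Z] [DecidableEq Z] (L : A → Z → ℝ) (p : Z → ℝ)
    (W : Type) [Fintype W] [DecidableEq W] (L' : A → W → ℝ) (q : W → ℝ)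
    (hfold : Folded A Z L p W L' q) (hp : InSimplex p) :
    Hent L p ≤ Hent L' q := by
  induction hfold with
  | refl Z L p => exact le_refl _
  | step Z L p i j hij W L' q h ih =>
      refine le_trans ?_ (ih (foldP_simplex hij hp))
      apply Finset.le_inf'
      intro a _
      exact le_trans (Finset.inf'_le _ (mem_univ a)) (step_le a hij L hp)
end
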